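/- For pattern matrices M and N of the same dimensions, the Minkowski sum of their pattern classes equals the pattern class of their sum: P(M) + P(N) = P(M + N). -/

import Mathlib

inductive PSym | zero | star | any
deriving DecidableEq

namespace PSym

def symAdd : PSym → PSym → PSym
  | zero, x => x
  | x, zero => x
  | _, _ => any

def symMul : PSym → PSym → PSym
  | zero, _ => zero
  | _, zero => zero
  | star, star => star
  | _, _ => any

instance : Zero PSym := ⟨zero⟩
instance : Add PSym := ⟨symAdd⟩

instance : AddCommMonoid PSym where
  add_assoc a b c := by cases a <;> cases b <;> cases c <;> rfl
  zero_add a := by cases a <;> rfl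
  add_zero a := by cases a <;> rfl
  add_comm a b := by cases a <;> cases b <;> rfl
  nsmul := nsmulRec

end PSym

/-- The pattern class of a pattern matrix. -/
def PatClass {p q : Type*} (M : Matrix p q PSym) : Set (Matrix p q ℝ) :=
  {A | ∀ i j, (M i j = PSym.zero → A i j = 0) ∧ (M i j = PSym.star → A i j ≠ 0)}

/-- Product of pattern matrices. -/
def patMul {p q s : ℕ} (M : Matrix (Fin p) (Fin q) PSym) (N : Matrix (Fin q) (Fin s) PSym) :
    Matrix (Fin p) (Fin s) PSym :=
  fun i j => ∑ k, PSym.symMul (M i k) (N k j)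

/-- A 1×q pattern vector `M` is independent of an r×q pattern matrix `N`. -/
def Independent {q r : ℕ} (M : Matrix (Fin 1) (Fin q) PSym) (N : Matrix (Fin r) (Fin q) PSym) : Prop :=
  ∀ M₀ ∈ PatClass M, ∀ N₀ ∈ PatClass N, ∀ (z₁ : ℝ) (z₂ : Fin r → ℝ),
    (∀ j, z₁ * M₀ 0 j + ∑ i, z₂ i * N₀ i j = 0) → z₁ = 0

/-! A real matrix lies in a pattern class exactly when each entry lies in the set of reals its
symbol allows (`{0}`, `{0}ᶜ` or `ℝ`), so the theorem reduces to one entry, where the only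
nontrivial case is `{0}ᶜ + {0}ᶜ = ℝ`: write `x = (x - (|x| + 1)) + (|x| + 1)`. -/

open Set Pointwise

theorem Set.compl_zero_add_compl_zero {α : Type*} [Ring α] [LinearOrder α] [IsStrictOrderedRing α] :
    ({0}ᶜ : Set α) + {0}ᶜ = univ := by
  refine eq_univ_of_forall fun x => ⟨x - (|x| + 1), ?_, |x| + 1, ?_, sub_add_cancel x _⟩
  · exact sub_ne_zero.mpr ((le_abs_self x).trans_lt (lt_add_one _)).ne
  · exact (add_pos_of_nonneg_of_pos (abs_nonneg x) one_pos).ne'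

namespace PSym

def realSet : PSym → Set ℝ
  | zero => {0}
  | star => {0}ᶜ
  | any => univ

theorem realSet_add : ∀ a b : PSym, a.realSet + b.realSet = (a + b).realSet
  | zero, b => zero_add b.realSet
  | star, zero => add_zero _
  | any, zero => add_zero _
  | star, star => compl_zero_add_compl_zero
  | star, any => add_univ ⟨1, one_ne_zero⟩
  | any, star => univ_add ⟨1, one_ne_zero⟩
  | any, any => univ_add univ_nonempty

end PSym

theorem mem_patClass_iff {p q : Type*} {M : Matrix p q PSym} {A : Matrix p q ℝ} :
    A ∈ PatClass M ↔ ∀ i j, A i j ∈ (M i j).realSet := by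
  refine forall₂_congr fun i j => ?_
  cases M i j <;> simp [PSym.realSet]

theorem patClass_add {p q : Type*} (M N : Matrix p q PSym) :
    PatClass M + PatClass N = PatClass (M + N) := by
  ext X
  simp only [mem_add, mem_patClass_iff, Matrix.add_apply, ← PSym.realSet_add]
  constructor
  · rintro ⟨A, hA, B, hB, rfl⟩ i j
    exact ⟨A i j, hA i j, B i j, hB i j, rfl⟩
  · intro h
    choose A hA B hB hAB using h
    exact ⟨Matrix.of A, hA, Matrix.of B, hB, Matrix.ext hAB⟩

/-- For pattern matrices `M` and `N` of the same dimensions,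
`P(M) + P(N) = P(M + N)` (Minkowski sum of pattern classes). -/
theorem pattern_class_add {p q : ℕ} (M N : Matrix (Fin p) (Fin q) PSym) :
    {X : Matrix (Fin p) (Fin q) ℝ | ∃ A ∈ PatClass M, ∃ B ∈ PatClass N, X = A + B} =
      PatClass (fun i j => M i j + N i j) := by
  change _ = PatClass (M + N)
  rw [← patClass_add]
  ext X
  simp only [mem_ofPred_eq, mem_add, eq_comm]
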